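/- Let X be a connected, locally compact, non-compact metric space whose one-point compactification X̂ = X ∪ {∞} is metrizable. Define two points of X to be equivalent if they lie in a common compact connected subset of X, and call the equivalence classes the compactly connected components. Then for every compactly connected component E of X, the point ∞ lies in the closure of E in X̂. -/

import Mathlib

/-!
If `∞` were not in the closure of the compactly connected component `S` of `x`, the closure of
`S` would be compact and hence lie in the interior of a compact set `L`. The component of `x` in
`L` is compact and connected, so it lies in `S`, hence in the interior of `L`. In the compact
Hausdorff space `L` it is then cut off from `L \ interior L` by a clopen set, whose image in `X`
is compact and open, hence clopen: by connectedness it is all of `X`, contradicting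
non-compactness.
-/

open Set

section

variable {X : Type*} [TopologicalSpace X]

lemma exists_isClopen_mem_disjoint_of_disjoint_connectedComponent [T2Space X] [CompactSpace X]
    {x : X} {F : Set X} (hF : IsClosed F)
    (hd : Disjoint (connectedComponent x) F) :
    ∃ A : Set X, IsClopen A ∧ x ∈ A ∧ Disjoint A F := by
  let N := { s : Set X // IsClopen s ∧ x ∈ s }
  have : Nonempty N := ⟨⟨univ, isClopen_univ, mem_univ x⟩⟩
  have hdir : Directed (· ⊇ ·) fun s : N => s.val := by
    rintro ⟨s, hs, hxs⟩ ⟨t, ht, hxt⟩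
    exact ⟨⟨s ∩ t, hs.inter ht, ⟨hxs, hxt⟩⟩, inter_subset_left, inter_subset_right⟩
  have hnhds : ∀ y ∈ ⋂ s : N, s.val, Fᶜ ∈ nhds y := by
    intro y hy
    rw [← connectedComponent_eq_iInter_isClopen] at hy
    exact hF.isOpen_compl.mem_nhds (disjoint_left.1 hd hy)
  obtain ⟨s, hs⟩ := exists_subset_nhds_of_compactSpace hdir (fun s => s.2.1.1) hnhds
  exact ⟨s.val, s.2.1, s.2.2, disjoint_compl_left.mono_left hs⟩

lemma IsCompact.exists_isClopen_isCompact_of_connectedComponentIn_subset_interior [T2Space X]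
    {L : Set X} (hL : IsCompact L) {x : X} (hx : x ∈ L)
    (h : connectedComponentIn L x ⊆ interior L) :
    ∃ B : Set X, IsClopen B ∧ IsCompact B ∧ x ∈ B := by
  have : CompactSpace L := isCompact_iff_compactSpace.1 hL
  have hd : Disjoint (connectedComponent (⟨x, hx⟩ : L)) (Subtype.val ⁻¹' (interior L)ᶜ) :=
    disjoint_left.2 fun z hz hzF =>
      hzF (h (connectedComponentIn_eq_image hx ▸ mem_image_of_mem _ hz))
  obtain ⟨A, hA, hxA, hAF⟩ := exists_isClopen_mem_disjoint_of_disjoint_connectedComponent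
    (isOpen_interior.isClosed_compl.preimage continuous_subtype_val) hd
  have hAint : Subtype.val '' A ⊆ interior L := by
    rintro _ ⟨z, hz, rfl⟩
    by_contra hz'
    exact disjoint_left.1 hAF hz hz'
  have hAcpt : IsCompact (Subtype.val '' A) :=
    hA.isClosed.isCompact.image continuous_subtype_val
  obtain ⟨V, hV, hAV⟩ := hA.isOpen.image_val
  have hAopen : IsOpen (Subtype.val '' A) := by
    have hAeq : Subtype.val '' A = V ∩ interior L :=
      Subset.antisymm (subset_inter (hAV ▸ inter_subset_left) hAint)
        (hAV ▸ inter_subset_inter_right V interior_subset)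
    exact hAeq ▸ hV.inter isOpen_interior
  exact ⟨_, ⟨hAcpt.isClosed, hAopen⟩, hAcpt, ⟨x, hx⟩, hxA, rfl⟩

lemma IsCompact.connectedComponentIn_not_subset_interior [PreconnectedSpace X] [T2Space X]
    [NoncompactSpace X] {L : Set X} (hL : IsCompact L) {x : X} (hx : x ∈ L) :
    ¬ connectedComponentIn L x ⊆ interior L := by
  intro h
  obtain ⟨B, hB, hBcpt, hxB⟩ :=
    hL.exists_isClopen_isCompact_of_connectedComponentIn_subset_interior hx h
  exact noncompact_univ X (hB.eq_univ ⟨x, hxB⟩ ▸ hBcpt)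

def compactlyConnectedComponent (x : X) : Set X :=
  {y : X | ∃ K : Set X, IsCompact K ∧ IsConnected K ∧ x ∈ K ∧ y ∈ K}

lemma IsCompact.connectedComponentIn_subset_compactlyConnectedComponent {L : Set X}
    (hL : IsCompact L) {x : X} (hx : x ∈ L) :
    connectedComponentIn L x ⊆ compactlyConnectedComponent x := by
  have : CompactSpace L := isCompact_iff_compactSpace.1 hL
  have hcpt : IsCompact (connectedComponentIn L x) := by
    rw [connectedComponentIn_eq_image hx]
    exact isClosed_connectedComponent.isCompact.image continuous_subtype_val
  exact fun y hy => ⟨_, hcpt, isConnected_connectedComponentIn_iff.2 hx,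
    mem_connectedComponentIn hx, hy⟩

lemma OnePoint.isCompact_closure_of_infty_notMem_closure {s : Set X}
    (h : (OnePoint.infty : OnePoint X) ∉ closure ((↑) '' s)) : IsCompact (closure s) := by
  have hnhds : ((↑) '' s : Set (OnePoint X))ᶜ ∈ nhds OnePoint.infty := by
    rwa [← mem_interior_iff_mem_nhds, interior_compl]
  rw [← Filter.compl_mem_coclosedCompact, ← OnePoint.comap_coe_nhds_infty]
  exact Filter.mem_comap.2 ⟨_, hnhds, fun y hy hys => hy ⟨y, hys, rfl⟩⟩

end

theorem infty_mem_closure_compactlyConnectedComponent_general {X : Type*} [MetricSpace X]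
    [ConnectedSpace X] [LocallyCompactSpace X] (hnc : ¬ CompactSpace X)
    (x : X) :
    (OnePoint.infty : OnePoint X) ∈
      closure (OnePoint.some ''
        {y : X | ∃ K : Set X, IsCompact K ∧ IsConnected K ∧ x ∈ K ∧ y ∈ K}) := by
  have := not_compactSpace_iff.1 hnc
  change _ ∈ closure (OnePoint.some '' compactlyConnectedComponent x)
  by_contra h
  obtain ⟨L, hL, hSL⟩ :=
    exists_compact_superset (OnePoint.isCompact_closure_of_infty_notMem_closure h)
  have hxS : x ∈ compactlyConnectedComponent x :=
    ⟨{x}, isCompact_singleton, isConnected_singleton, rfl, rfl⟩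
  have hxL : x ∈ L := interior_subset (hSL (subset_closure hxS))
  exact hL.connectedComponentIn_not_subset_interior hxL <|
    (hL.connectedComponentIn_subset_compactlyConnectedComponent hxL).trans
      (subset_closure.trans hSL)

/-- Let `X` be a connected, locally compact, non-compact metric space
whose one-point compactification `X ∪ {∞}` is metrizable. Then for every point `x`, the
point `∞` lies in the closure of the compactly connected component of `x`, i.e. of the set
of points joined to `x` by a compact connected subset of `X`. -/
theorem infty_mem_closure_compactlyConnectedComponent {X : Type*} [MetricSpace X]
    [ConnectedSpace X] [LocallyCompactSpace X] (hnc : ¬ CompactSpace X)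
    [TopologicalSpace.MetrizableSpace (OnePoint X)] (x : X) :
    (OnePoint.infty : OnePoint X) ∈
      closure (OnePoint.some ''
        {y : X | ∃ K : Set X, IsCompact K ∧ IsConnected K ∧ x ∈ K ∧ y ∈ K}) :=
  infty_mem_closure_compactlyConnectedComponent_general hnc x
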